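/- arXiv:2602.03041 — 3 statements merged into one kernel-verified Lean document; each statement's English description precedes it below -/
import Mathlib

section
/- Fix n ≥ 1. Let D be a ℂ-linear triangulated category equipped with objects {L_I}_{I ∈ {0,1}^n} such that Hom(L_I, L_I) = ℂ for every I, and Hom(L_I, L_{I'}[k]) = 0 whenever it is not the case that both I ≤ I' componentwise and k = 0. Let φ ∈ ℝ and φ_1, …, φ_n ≥ 1 be real numbers, and for I = (i_1, …, i_n) ∈ {0,1}^n set φ_I := φ + Σ_{ℓ=1}^n i_ℓ·φ_ℓ and p_I := −⌈φ_I − 1⌉. Then the shifted collection {L_I[p_I]}_{I ∈ {0,1}^n} is Ext-exceptional: for all I ≠ I' and all integers k ≤ 0, Hom(L_I[p_I], L_{I'}[p_{I'}][k]) = 0, and each L_I[p_I] is exceptional. -/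
open CategoryTheory CategoryTheory.Limits CategoryTheory.Pretriangulated
open scoped BigOperators

universe v u

/-- The phase `φ_I = φ + Σ_ℓ i_ℓ · φ_ℓ` attached to `I ∈ {0,1}^n`. -/
noncomputable def phaseOfIndex {n : ℕ} (φ : ℝ) (φs : Fin n → ℝ) (I : Fin n → Fin 2) : ℝ :=
  φ + ∑ ℓ : Fin n, ((I ℓ : ℕ) : ℝ) * φs ℓ

/-- The integer shift `p_I = -⌈φ_I - 1⌉`. -/
noncomputable def shiftOfIndex {n : ℕ} (φ : ℝ) (φs : Fin n → ℝ) (I : Fin n → Fin 2) : ℤ :=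
  -⌈phaseOfIndex φ φs I - 1⌉

section Aux
variable {C : Type u} [Category.{v} C] [Preadditive C] [HasShift C ℤ]
  [∀ k : ℤ, (shiftFunctor C k).Additive]

lemma aux_shift_zero (X Y : C) (a m b : ℤ) (hb : b = m + a)
    (h : ∀ g : X ⟶ Y⟦m⟧, g = 0) (f : X⟦a⟧ ⟶ Y⟦b⟧) : f = 0 := by
  have iso := (shiftFunctorAdd' C m a b hb.symm).app Y
  have h2 : f ≫ iso.hom = (shiftFunctor C a).map ((shiftFunctor C a).preimage (f ≫ iso.hom)) :=
    ((shiftFunctor C a).map_preimage _).symm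
  rw [h ((shiftFunctor C a).preimage (f ≫ iso.hom)), Functor.map_zero] at h2
  calc f = (f ≫ iso.hom) ≫ iso.inv := by simp
  _ = 0 := by rw [h2]; simp

lemma aux_shift_zero' (X Y : C) (a b k m : ℤ) (hm : m = b + k - a)
    (h : ∀ g : X ⟶ Y⟦m⟧, g = 0) (f : X⟦a⟧ ⟶ (Y⟦b⟧)⟦k⟧) : f = 0 := by
  have iso := (shiftFunctorAdd' C b k (b + k) rfl).app Y
  have h2 : f ≫ iso.inv = 0 := aux_shift_zero X Y a m (b + k) (by omega) h _
  calc f = (f ≫ iso.inv) ≫ iso.hom := by simp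
  _ = 0 := by rw [h2]; simp

/-- Shifting gives a `ℂ`-linear equivalence on hom spaces. -/
noncomputable def auxShiftLinearEquiv [CategoryTheory.Linear ℂ C]
    [∀ k : ℤ, (shiftFunctor C k).Linear ℂ] (X Y : C) (p : ℤ) :
    (X ⟶ Y) ≃ₗ[ℂ] (X⟦p⟧ ⟶ Y⟦p⟧) where
  toFun := (shiftFunctor C p).map
  map_add' f g := (shiftFunctor C p).map_add
  map_smul' c f := (shiftFunctor C p).map_smul c f
  invFun := (shiftFunctor C p).preimage
  left_inv f := (shiftFunctor C p).preimage_map f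
  right_inv f := (shiftFunctor C p).map_preimage f

end Aux

lemma aux_phase_lt {n : ℕ} (φ : ℝ) (φs : Fin n → ℝ) (hφs : ∀ ℓ, 1 ≤ φs ℓ)
    {I I' : Fin n → Fin 2} (hle : ∀ ℓ, I ℓ ≤ I' ℓ) (hne : I ≠ I') :
    phaseOfIndex φ φs I + 1 ≤ phaseOfIndex φ φs I' := by
  obtain ⟨ℓ0, hℓ0⟩ : ∃ ℓ, I ℓ ≠ I' ℓ := Function.ne_iff.mp hne
  have h01 : (I ℓ0 : ℕ) = 0 ∧ (I' ℓ0 : ℕ) = 1 := by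
    have := hle ℓ0
    have h1 := (I ℓ0).isLt
    have h2 := (I' ℓ0).isLt
    rw [Fin.le_def] at this
    have : (I ℓ0 : ℕ) ≠ (I' ℓ0 : ℕ) := fun h => hℓ0 (Fin.ext h)
    omega
  have key : (1 : ℝ) ≤ ∑ ℓ : Fin n, (((I' ℓ : ℕ) : ℝ) - ((I ℓ : ℕ) : ℝ)) * φs ℓ := by
    have hterm : (1 : ℝ) ≤ (((I' ℓ0 : ℕ) : ℝ) - ((I ℓ0 : ℕ) : ℝ)) * φs ℓ0 := by
      rw [h01.1, h01.2]; simpa using hφs ℓ0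
    refine le_trans hterm (Finset.single_le_sum (f := fun ℓ => (((I' ℓ : ℕ) : ℝ) - ((I ℓ : ℕ) : ℝ)) * φs ℓ) ?_ (Finset.mem_univ ℓ0))
    intro ℓ _
    have h1 : (I ℓ : ℕ) ≤ (I' ℓ : ℕ) := Fin.le_def.mp (hle ℓ)
    have h2 : (0 : ℝ) ≤ ((I' ℓ : ℕ) : ℝ) - ((I ℓ : ℕ) : ℝ) := by
      have := Nat.cast_le (α := ℝ) |>.mpr h1; linarith
    have h3 : (0 : ℝ) ≤ φs ℓ := le_trans zero_le_one (hφs ℓ)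
    positivity
  unfold phaseOfIndex
  have key2 : ∑ ℓ : Fin n, (((I' ℓ : ℕ) : ℝ) - ((I ℓ : ℕ) : ℝ)) * φs ℓ =
      ∑ ℓ : Fin n, ((I' ℓ : ℕ) : ℝ) * φs ℓ - ∑ ℓ : Fin n, ((I ℓ : ℕ) : ℝ) * φs ℓ := by
    rw [← Finset.sum_sub_distrib]
    exact Finset.sum_congr rfl fun ℓ _ => by ring
  rw [key2] at key
  linarith

lemma aux_shift_lt {n : ℕ} (φ : ℝ) (φs : Fin n → ℝ) (hφs : ∀ ℓ, 1 ≤ φs ℓ)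
    {I I' : Fin n → Fin 2} (hle : ∀ ℓ, I ℓ ≤ I' ℓ) (hne : I ≠ I') :
    shiftOfIndex φ φs I' ≤ shiftOfIndex φ φs I - 1 := by
  have h := aux_phase_lt φ φs hφs hle hne
  have hc : ⌈phaseOfIndex φ φs I - 1⌉ + 1 ≤ ⌈phaseOfIndex φ φs I' - 1⌉ := by
    have : ⌈phaseOfIndex φ φs I - 1 + 1⌉ ≤ ⌈phaseOfIndex φ φs I' - 1⌉ :=
      Int.ceil_le_ceil (by linarith)
    rwa [Int.ceil_add_one] at this
  unfold shiftOfIndex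
  omega

/-- The shifted collection `{L_I[p_I]}` is Ext-exceptional: for `I ≠ I'` and `k ≤ 0`,
`Hom(L_I[p_I], L_{I'}[p_{I'}][k]) = 0`, and each `L_I[p_I]` is exceptional. -/
theorem stmt_2 {C : Type u} [Category.{v} C] [Preadditive C] [CategoryTheory.Linear ℂ C]
    [HasZeroObject C] [HasShift C ℤ] [∀ k : ℤ, (shiftFunctor C k).Additive]
    [∀ k : ℤ, (shiftFunctor C k).Linear ℂ] [Pretriangulated C]
    [∀ X Y : C, FiniteDimensional ℂ (X ⟶ Y)]
    (n : ℕ) (hn : 1 ≤ n) (L : (Fin n → Fin 2) → C)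
    (hendo : ∀ I : Fin n → Fin 2, Module.finrank ℂ (L I ⟶ L I) = 1)
    (hvanish : ∀ I I' : Fin n → Fin 2, ∀ k : ℤ, ¬ ((∀ ℓ, I ℓ ≤ I' ℓ) ∧ k = 0) →
      ∀ f : L I ⟶ (L I')⟦k⟧, f = 0)
    (φ : ℝ) (φs : Fin n → ℝ) (hφs : ∀ ℓ, 1 ≤ φs ℓ) :
    (∀ I I' : Fin n → Fin 2, I ≠ I' → ∀ k : ℤ, k ≤ 0 →
      ∀ f : (L I)⟦shiftOfIndex φ φs I⟧ ⟶ ((L I')⟦shiftOfIndex φ φs I'⟧)⟦k⟧, f = 0) ∧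
    (∀ I : Fin n → Fin 2,
      Module.finrank ℂ ((L I)⟦shiftOfIndex φ φs I⟧ ⟶ (L I)⟦shiftOfIndex φ φs I⟧) = 1 ∧
      ∀ k : ℤ, k ≠ 0 →
        ∀ f : (L I)⟦shiftOfIndex φ φs I⟧ ⟶ ((L I)⟦shiftOfIndex φ φs I⟧)⟦k⟧, f = 0) := by
  constructor
  · intro I I' hne k hk f
    set m : ℤ := shiftOfIndex φ φs I' + k - shiftOfIndex φ φs I with hm
    refine aux_shift_zero' (L I) (L I') _ _ k m rfl ?_ f
    intro g
    refine hvanish I I' m ?_ g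
    rintro ⟨hle, hm0⟩
    have := aux_shift_lt φ φs hφs hle hne
    omega
  · intro I
    constructor
    · rw [← LinearEquiv.finrank_eq (auxShiftLinearEquiv (L I) (L I) (shiftOfIndex φ φs I))]
      exact hendo I
    · intro k hk f
      refine aux_shift_zero' (L I) (L I) _ _ k k (by ring) ?_ f
      intro g
      exact hvanish I I k (by rintro ⟨_, h⟩; exact hk h) g
end

section
/- Fix n ≥ 1. Let D be a ℂ-linear triangulated category equipped with objects {L_I}_{I ∈ {0,1}^n} such that Hom(L_I, L_{I'}[k]) = 0 whenever it is not the case that both I ≤ I' componentwise and k = 0. Let φ ∈ ℝ and φ_1, …, φ_n ≥ 1 be real numbers, and for I = (i_1, …, i_n) ∈ {0,1}^n set φ_I := φ + Σ_{ℓ=1}^n i_ℓ·φ_ℓ and p_I := −⌈φ_I − 1⌉. Then for any I, I' ∈ {0,1}^n with φ_I + p_I < φ_{I'} + p_{I'}, one has Hom(L_{I'}[p_{I'}], L_I[p_I][1]) = 0. -/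
open CategoryTheory CategoryTheory.Limits CategoryTheory.Pretriangulated
open scoped BigOperators

universe v u

/-- Ext¹-vanishing between shifted generators of ascending phase: if
`Hom(L_I, L_{I'}[k]) = 0` unless `I ≤ I'` and `k = 0`, and the shifted phases satisfy
`φ_I + p_I < φ_{I'} + p_{I'}`, then `Hom(L_{I'}[p_{I'}], L_I[p_I][1]) = 0`. -/
theorem stmt_3 {C : Type u} [Category.{v} C] [Preadditive C] [CategoryTheory.Linear ℂ C]
    [HasZeroObject C] [HasShift C ℤ] [∀ k : ℤ, (shiftFunctor C k).Additive]
    [Pretriangulated C]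
    (n : ℕ) (hn : 1 ≤ n) (L : (Fin n → Fin 2) → C)
    (hvanish : ∀ I I' : Fin n → Fin 2, ∀ k : ℤ, ¬ ((∀ ℓ, I ℓ ≤ I' ℓ) ∧ k = 0) →
      ∀ f : L I ⟶ (L I')⟦k⟧, f = 0)
    (φ : ℝ) (φs : Fin n → ℝ) (hφs : ∀ ℓ, 1 ≤ φs ℓ)
    (I I' : Fin n → Fin 2)
    (hlt : phaseOfIndex φ φs I + (shiftOfIndex φ φs I : ℝ) <
      phaseOfIndex φ φs I' + (shiftOfIndex φ φs I' : ℝ)) :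
    ∀ f : (L I')⟦shiftOfIndex φ φs I'⟧ ⟶ ((L I)⟦shiftOfIndex φ φs I⟧)⟦(1 : ℤ)⟧, f = 0 := by
  set p : ℤ := shiftOfIndex φ φs I with hp
  set p' : ℤ := shiftOfIndex φ φs I' with hp'
  set k : ℤ := p + 1 - p' with hk
  intro f0
  -- the arithmetic condition
  have hcond : ¬ ((∀ ℓ, I' ℓ ≤ I ℓ) ∧ k = 0) := by
    rintro ⟨hle, hk0⟩
    have hpp : p' = p + 1 := by omega
    by_cases hII : I' = I
    · rw [hII] at hp'
      omega
    · obtain ⟨ℓ0, hℓ0⟩ : ∃ ℓ, I' ℓ ≠ I ℓ := by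
        by_contra h
        push_neg at h
        exact hII (funext h)
      have hval : (I' ℓ0 : ℕ) = 0 ∧ (I ℓ0 : ℕ) = 1 := by
        have h1 := (I' ℓ0).isLt
        have h2 := (I ℓ0).isLt
        have h3 : (I' ℓ0 : ℕ) ≤ (I ℓ0 : ℕ) := hle ℓ0
        have h4 : (I' ℓ0 : ℕ) ≠ (I ℓ0 : ℕ) := fun h => hℓ0 (Fin.ext h)
        omega
      -- φ_{I'} + 1 ≤ φ_I
      have hterm : ∀ ℓ ∈ Finset.univ, (0:ℝ) ≤
          ((I ℓ : ℕ) : ℝ) * φs ℓ - ((I' ℓ : ℕ) : ℝ) * φs ℓ := by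
        intro ℓ _
        have h1 : ((I' ℓ : ℕ) : ℝ) ≤ ((I ℓ : ℕ) : ℝ) := by exact_mod_cast hle ℓ
        have h2 : (0:ℝ) ≤ φs ℓ := le_trans zero_le_one (hφs ℓ)
        nlinarith
      have hsingle := Finset.single_le_sum hterm (Finset.mem_univ ℓ0)
      rw [hval.1, hval.2] at hsingle
      simp only [Nat.cast_one, Nat.cast_zero, one_mul, zero_mul, sub_zero] at hsingle
      have hsum : (1:ℝ) ≤ ∑ ℓ : Fin n,
          (((I ℓ : ℕ) : ℝ) * φs ℓ - ((I' ℓ : ℕ) : ℝ) * φs ℓ) :=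
        le_trans (hφs ℓ0) hsingle
      rw [Finset.sum_sub_distrib] at hsum
      have hph : phaseOfIndex φ φs I' + 1 ≤ phaseOfIndex φ φs I := by
        unfold phaseOfIndex; linarith
      have : (p' : ℝ) = (p : ℝ) + 1 := by exact_mod_cast congrArg Int.cast hpp
      linarith
  -- the categorical part
  have e : ((L I)⟦p⟧)⟦(1:ℤ)⟧ ≅ ((L I)⟦k⟧)⟦p'⟧ :=
    ((shiftFunctorAdd' C p 1 (p + 1) rfl).app (L I)).symm ≪≫
      eqToIso (by rw [show p + 1 = k + p' by omega]) ≪≫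
      (shiftFunctorAdd' C k p' (k + p') rfl).app (L I)
  obtain ⟨g, hg⟩ := (shiftFunctor C p').map_surjective (f0 ≫ e.hom)
  have hg0 : g = 0 := hvanish I' I k hcond g
  have : f0 ≫ e.hom = 0 := by rw [← hg, hg0, Functor.map_zero]
  rw [← cancel_mono e.hom, Limits.zero_comp]
  exact this
end

section
/- Let D be a ℂ-linear triangulated category with finite-dimensional Hom-spaces in each degree, and let σ = (Z, P) be a Bridgeland stability condition on D whose heart A = P((0,1]) is the extension closure of a full Ext-exceptional collection {F_1, …, F_m} consisting of σ-stable objects with phases φ_σ(F_i) ∈ (0,1]. Assume that Hom(F_j, F_i[1]) = 0 whenever φ_σ(F_i) < φ_σ(F_j). Then every σ-stable object of D is isomorphic to F_i[k] for some 1 ≤ i ≤ m and some k ∈ ℤ. -/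
open CategoryTheory CategoryTheory.Limits CategoryTheory.Pretriangulated
open scoped BigOperators

universe v u

variable (C : Type u) [Category.{v} C] [Preadditive C] [HasZeroObject C] [HasShift C ℤ]
  [∀ k : ℤ, (shiftFunctor C k).Additive] [Pretriangulated C]

/-- A Bridgeland stability condition `σ = (Z, P)` on a (pre)triangulated category `C`,
with respect to a finite-rank lattice `Λ`, a class map `cls : C → Λ` (modeling the
projection `K₀(C) → Λ`) and a norm `nrm` on `Λ` (modeling a norm on `Λ ⊗ ℝ`):
a central charge `Z : Λ → ℂ` and full additive (in particular, isomorphism-closed)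
subcategories `P(φ)` of semistable objects of phase `φ`, satisfying Bridgeland's axioms,
including Harder–Narasimhan filtrations and the support property. -/
structure BridgelandStabilityCondition {Λ : Type} [AddCommGroup Λ]
    (cls : C → Λ) (nrm : Λ → ℝ) where
  /-- The central charge. -/
  Z : Λ →+ ℂ
  /-- The semistable objects of each phase. -/
  P : ℝ → Set C
  /-- Each `P(φ)` is closed under isomorphisms (it is a full subcategory). -/
  isoClosed : ∀ (φ : ℝ) (X Y : C), (X ≅ Y) → X ∈ P φ → Y ∈ P φ
  /-- `P(φ)` is additive: it contains zero objects. -/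
  zeroMem : ∀ (φ : ℝ) (X : C), IsZero X → X ∈ P φ
  /-- `P(φ)` is additive: it is closed under direct sums. -/
  sumMem : ∀ (φ : ℝ) (X Y : C), X ∈ P φ → Y ∈ P φ → (X ⊞ Y) ∈ P φ
  /-- Axiom (i): nonzero semistable objects of phase `φ` have central charge in
  `ℝ_{>0} · e^{iπφ}`. -/
  charge : ∀ (φ : ℝ) (X : C), X ∈ P φ → ¬ IsZero X →
    ∃ r : ℝ, 0 < r ∧ Z (cls X) = (r : ℂ) * Complex.exp ((Real.pi : ℂ) * φ * Complex.I)
  /-- Axiom (ii): `P(φ + 1) = P(φ)[1]`. -/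
  shiftMem : ∀ (φ : ℝ) (X : C), X ∈ P (φ + 1) ↔ ∃ Y ∈ P φ, Nonempty (X ≅ Y⟦(1 : ℤ)⟧)
  /-- Axiom (iii): no nonzero morphisms from higher to lower phase. -/
  homZero : ∀ (φ₁ φ₂ : ℝ), φ₂ < φ₁ → ∀ X ∈ P φ₁, ∀ Y ∈ P φ₂, ∀ f : X ⟶ Y, f = 0
  /-- Axiom (iv): Harder–Narasimhan filtrations, as finite towers of distinguished
  triangles with semistable cones of strictly decreasing phases. -/
  HN : ∀ X : C, ¬ IsZero X → ∃ (m : ℕ) (F : Fin (m + 1) → C) (ψ : Fin m → ℝ),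
    StrictAnti ψ ∧ IsZero (F 0) ∧ Nonempty (F (Fin.last m) ≅ X) ∧
    ∀ j : Fin m, ∃ (A : C) (_ : A ∈ P (ψ j)) (f : F j.castSucc ⟶ F j.succ)
      (g : F j.succ ⟶ A) (h : A ⟶ (F j.castSucc)⟦(1 : ℤ)⟧),
        Triangle.mk f g h ∈ distTriang C
  /-- Axiom (v): the support property. -/
  support : ∃ K : ℝ, 0 < K ∧ ∀ (φ : ℝ), ∀ X ∈ P φ, K * nrm (cls X) ≤ ‖Z (cls X)‖

namespace BridgelandStabilityCondition

variable {C} {Λ : Type} [AddCommGroup Λ] {cls : C → Λ} {nrm : Λ → ℝ}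

/-- An object is `σ`-semistable of phase `φ` if it is a nonzero object of `P(φ)`. -/
def IsSemistable (σ : BridgelandStabilityCondition C cls nrm) (φ : ℝ) (X : C) : Prop :=
  X ∈ σ.P φ ∧ ¬ IsZero X

/-- An object is `σ`-stable of phase `φ` if it is semistable of phase `φ` and admits no
short exact sequence (distinguished triangle) `A → X → B` with `A, B` nonzero objects of
`P(φ)`. -/
def IsStable (σ : BridgelandStabilityCondition C cls nrm) (φ : ℝ) (X : C) : Prop :=
  σ.IsSemistable φ X ∧
    ∀ (A B : C), A ∈ σ.P φ → ¬ IsZero A → B ∈ σ.P φ → ¬ IsZero B →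
      ∀ (f : A ⟶ X) (g : X ⟶ B) (h : B ⟶ A⟦(1 : ℤ)⟧),
        Triangle.mk f g h ∉ distTriang C

end BridgelandStabilityCondition

/-- `S` generates `C` as a triangulated category: every class of objects closed under
isomorphisms, shifts and extensions (cones) which contains `S` contains every object. -/
def TriangulatedGenerates (S : Set C) : Prop :=
  ∀ T : Set C,
    (∀ X Y : C, (X ≅ Y) → X ∈ T → Y ∈ T) →
    (∀ X ∈ T, ∀ k : ℤ, X⟦k⟧ ∈ T) →
    (∀ Tr : Triangle C, Tr ∈ (distTriang C) → Tr.obj₁ ∈ T → Tr.obj₃ ∈ T → Tr.obj₂ ∈ T) →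
    S ⊆ T → ∀ X : C, X ∈ T

/-- The extension closure of a set of objects: the smallest class of objects containing
`S` and all zero objects, and closed under isomorphisms and extensions
(if `A → B → C` is a distinguished triangle with `A, C` in the class, so is `B`). -/
def extensionClosure (S : Set C) : Set C :=
  ⋂₀ {T : Set C | S ⊆ T ∧ (∀ X Y : C, (X ≅ Y) → X ∈ T → Y ∈ T) ∧
      (∀ X : C, IsZero X → X ∈ T) ∧
      (∀ Tr : Triangle C, Tr ∈ (distTriang C) → Tr.obj₁ ∈ T → Tr.obj₃ ∈ T → Tr.obj₂ ∈ T)}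

/-- The heart `A = P((0,1])` of a stability condition: the extension-closed subcategory
generated by the semistable objects of phase in `(0, 1]`. -/
def BridgelandStabilityCondition.heart {Λ : Type} [AddCommGroup Λ] {cls : C → Λ}
    {nrm : Λ → ℝ} (σ : BridgelandStabilityCondition C cls nrm) : Set C :=
  extensionClosure C (⋃ φ ∈ Set.Ioc (0 : ℝ) 1, σ.P φ)

/-!
Shift a stable object `X` into the heart; there it is an iterated extension of the `F_i`. Because
`Hom(F_i, F_j[-1]) = 0` and `Ext¹` between the `F_i` only goes from lower to higher phase, an
object of this extension closure that receives no map from the `F_i` of phase `> φ` is an extension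
of those of phase `≤ φ`, and such an object mapping to none of those of phase `< φ` is an extension
of those of phase `φ`. A semistable object of phase `φ` has neither kind of map, so `X` is an
iterated extension of `F_i`'s of its own phase. `P(φ)` is extension-closed (compare HN factors with
the Hom-vanishing that characterises `P(φ)`), so stability of `X` forces the extension to be trivial.
-/
variable {C}

theorem forall_hom_shift_eq_zero_iff {D : Type*} [Category D] [Preadditive D] [HasShift D ℤ]
    [∀ k : ℤ, (shiftFunctor D k).Additive] (a b : ℤ) (hab : a + b = 0) {X Y : D} :
    (∀ f : X⟦a⟧ ⟶ Y, f = 0) ↔ ∀ f : X ⟶ Y⟦b⟧, f = 0 := by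
  constructor
  · intro h f
    apply (shiftFunctor D a).map_injective
    rw [Functor.map_zero, ← cancel_mono ((shiftFunctorCompIsoId D b a (by omega)).hom.app Y),
      zero_comp]
    exact h _
  · intro h f
    apply (shiftFunctor D b).map_injective
    rw [Functor.map_zero, ← cancel_epi ((shiftFunctorCompIsoId D a b hab).inv.app X), comp_zero]
    exact h _

section ExtensionClosure

variable {S T : Set C}

theorem extensionClosure_subset (hST : S ⊆ T) (iso : ∀ X Y : C, (X ≅ Y) → X ∈ T → Y ∈ T)
    (zero : ∀ X : C, IsZero X → X ∈ T)
    (ext : ∀ Tr ∈ distTriang C, Tr.obj₁ ∈ T → Tr.obj₃ ∈ T → Tr.obj₂ ∈ T) :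
    extensionClosure C S ⊆ T :=
  Set.sInter_subset_of_mem ⟨hST, iso, zero, ext⟩

theorem subset_extensionClosure : S ⊆ extensionClosure C S :=
  Set.subset_sInter fun _ hT => hT.1

theorem mem_extensionClosure_of_iso {X Y : C} (e : X ≅ Y) (hX : X ∈ extensionClosure C S) :
    Y ∈ extensionClosure C S :=
  Set.mem_sInter.2 fun _ hT => hT.2.1 X Y e (Set.mem_sInter.1 hX _ hT)

theorem mem_extensionClosure_of_isZero {X : C} (hX : IsZero X) : X ∈ extensionClosure C S :=
  Set.mem_sInter.2 fun _ hT => hT.2.2.1 X hX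

theorem mem_extensionClosure_of_distTriang (Tr : Triangle C) (hTr : Tr ∈ distTriang C)
    (h₁ : Tr.obj₁ ∈ extensionClosure C S) (h₃ : Tr.obj₃ ∈ extensionClosure C S) :
    Tr.obj₂ ∈ extensionClosure C S :=
  Set.mem_sInter.2 fun _ hT =>
    hT.2.2.2 Tr hTr (Set.mem_sInter.1 h₁ _ hT) (Set.mem_sInter.1 h₃ _ hT)

@[elab_as_elim]
theorem extensionClosure_induction {p : (X : C) → X ∈ extensionClosure C S → Prop}
    (mem : ∀ X (hX : X ∈ S), p X (subset_extensionClosure hX))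
    (zero : ∀ X (hX : IsZero X), p X (mem_extensionClosure_of_isZero hX))
    (iso : ∀ X Y (e : X ≅ Y) hX, p X hX → p Y (mem_extensionClosure_of_iso e hX))
    (ext : ∀ Tr (hTr : Tr ∈ distTriang C) h₁ h₃, p Tr.obj₁ h₁ → p Tr.obj₃ h₃ →
      p Tr.obj₂ (mem_extensionClosure_of_distTriang Tr hTr h₁ h₃))
    {X : C} (hX : X ∈ extensionClosure C S) : p X hX := by
  suffices X ∈ {Y | ∃ hY, p Y hY} from this.elim fun _ h => h
  refine extensionClosure_subset (T := {Y | ∃ hY, p Y hY}) (fun Y hY => ⟨_, mem Y hY⟩) ?_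
    (fun Y hY => ⟨_, zero Y hY⟩) ?_ hX
  · rintro Y Y' e ⟨hY, h⟩
    exact ⟨_, iso Y Y' e hY h⟩
  · rintro Tr hTr ⟨h₁, p₁⟩ ⟨h₃, p₃⟩
    exact ⟨_, ext Tr hTr h₁ h₃ p₁ p₃⟩

theorem extensionClosure_mono (hST : S ⊆ T) : extensionClosure C S ⊆ extensionClosure C T :=
  extensionClosure_subset (hST.trans subset_extensionClosure)
    (fun _ _ e => mem_extensionClosure_of_iso e) (fun _ => mem_extensionClosure_of_isZero)
    (fun Tr hTr => mem_extensionClosure_of_distTriang Tr hTr)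

theorem shift_mem_extensionClosure {X : C} (hX : X ∈ extensionClosure C S) (n : ℤ) :
    X⟦n⟧ ∈ extensionClosure C ((shiftFunctor C n).obj '' S) := by
  induction hX using extensionClosure_induction with
  | mem X hX => exact subset_extensionClosure ⟨X, hX, rfl⟩
  | zero X hX => exact mem_extensionClosure_of_isZero ((shiftFunctor C n).map_isZero hX)
  | iso X Y e _ h => exact mem_extensionClosure_of_iso ((shiftFunctor C n).mapIso e) h
  | ext Tr hTr _ _ h₁ h₃ =>
    exact mem_extensionClosure_of_distTriang _ (Tr.shift_distinguished hTr n) h₁ h₃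

theorem hom_eq_zero_of_mem_extensionClosure_right {W : C} (hS : ∀ Z ∈ S, ∀ f : W ⟶ Z, f = 0)
    {Y : C} (hY : Y ∈ extensionClosure C S) (f : W ⟶ Y) : f = 0 := by
  induction hY using extensionClosure_induction with
  | mem Y hY => exact hS Y hY f
  | zero Y hY => exact hY.eq_of_tgt f 0
  | iso Y Y' e _ h => simpa using congrArg (· ≫ e.hom) (h (f ≫ e.inv))
  | ext Tr hTr _ _ h₁ h₃ =>
    obtain ⟨g, rfl⟩ := Triangle.coyoneda_exact₂ Tr hTr f (h₃ _)
    rw [h₁ g, zero_comp]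

theorem hom_eq_zero_of_mem_extensionClosure_left {W : C} (hS : ∀ Z ∈ S, ∀ f : Z ⟶ W, f = 0)
    {Y : C} (hY : Y ∈ extensionClosure C S) (f : Y ⟶ W) : f = 0 := by
  induction hY using extensionClosure_induction with
  | mem Y hY => exact hS Y hY f
  | zero Y hY => exact hY.eq_of_src f 0
  | iso Y Y' e _ h => simpa using congrArg (e.inv ≫ ·) (h (e.hom ≫ f))
  | ext Tr hTr _ _ h₁ h₃ =>
    obtain ⟨g, rfl⟩ := Triangle.yoneda_exact₂ Tr hTr f (h₁ _)
    rw [h₃ g, comp_zero]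

theorem mem_extensionClosure_of_forall_hom_from_eq_zero {S' : Set C}
    (hneg : ∀ X ∈ S, X ∉ S' → ∀ Z ∈ S, ∀ f : X ⟶ Z⟦(-1 : ℤ)⟧, f = 0)
    (hone : ∀ X ∈ S, X ∉ S' → ∀ Z ∈ S', ∀ f : X ⟶ Z⟦(1 : ℤ)⟧, f = 0)
    {Y : C} (hY : Y ∈ extensionClosure C S) (hom : ∀ X ∈ S, X ∉ S' → ∀ f : X ⟶ Y, f = 0) :
    Y ∈ extensionClosure C S' := by
  induction hY using extensionClosure_induction with
  | mem Y hY =>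
    by_cases hY' : Y ∈ S'
    · exact subset_extensionClosure hY'
    · exact mem_extensionClosure_of_isZero ((IsZero.iff_id_eq_zero _).2 (hom Y hY hY' _))
  | zero Y hY => exact mem_extensionClosure_of_isZero hY
  | iso Y Y' e _ ih =>
    refine mem_extensionClosure_of_iso e (ih fun X hX hX' u => ?_)
    simpa using congrArg (· ≫ e.inv) (hom X hX hX' (u ≫ e.hom))
  | ext Tr hTr _ h₃ ih₁ ih₃ =>
    have h₁ := ih₁ fun X hX hX' u => by
      obtain ⟨w, rfl⟩ := Triangle.coyoneda_exact₂ _ (inv_rot_of_distTriang _ hTr) u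
        (hom X hX hX' _)
      rw [hom_eq_zero_of_mem_extensionClosure_right
        (by rintro _ ⟨Z, hZ, rfl⟩ f; exact hneg X hX hX' Z hZ f)
        (shift_mem_extensionClosure h₃ (-1)) w]
      exact zero_comp
    refine mem_extensionClosure_of_distTriang Tr hTr h₁ (ih₃ fun X hX hX' u => ?_)
    obtain ⟨w, rfl⟩ := Triangle.coyoneda_exact₃ Tr hTr u
      (hom_eq_zero_of_mem_extensionClosure_right
        (by rintro _ ⟨Z, hZ, rfl⟩ f; exact hone X hX hX' Z hZ f)
        (shift_mem_extensionClosure h₁ 1) _)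
    rw [hom X hX hX' w, zero_comp]

theorem mem_extensionClosure_of_forall_hom_to_eq_zero {S' : Set C}
    (hneg : ∀ X ∈ S, X ∉ S' → ∀ Z ∈ S, ∀ f : Z ⟶ X⟦(-1 : ℤ)⟧, f = 0)
    (hone : ∀ X ∈ S, X ∉ S' → ∀ Z ∈ S', ∀ f : Z ⟶ X⟦(1 : ℤ)⟧, f = 0)
    {Y : C} (hY : Y ∈ extensionClosure C S) (hom : ∀ X ∈ S, X ∉ S' → ∀ f : Y ⟶ X, f = 0) :
    Y ∈ extensionClosure C S' := by
  induction hY using extensionClosure_induction with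
  | mem Y hY =>
    by_cases hY' : Y ∈ S'
    · exact subset_extensionClosure hY'
    · exact mem_extensionClosure_of_isZero ((IsZero.iff_id_eq_zero _).2 (hom Y hY hY' _))
  | zero Y hY => exact mem_extensionClosure_of_isZero hY
  | iso Y Y' e _ ih =>
    refine mem_extensionClosure_of_iso e (ih fun X hX hX' u => ?_)
    simpa using congrArg (e.hom ≫ ·) (hom X hX hX' (e.inv ≫ u))
  | ext Tr hTr h₁ _ ih₁ ih₃ =>
    have h₃ := ih₃ fun X hX hX' u => by
      obtain ⟨w, rfl⟩ := Triangle.yoneda_exact₃ Tr hTr u (hom X hX hX' _)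
      rw [(forall_hom_shift_eq_zero_iff 1 (-1) rfl).2
        (hom_eq_zero_of_mem_extensionClosure_left (hneg X hX hX') h₁) w, comp_zero]
    refine mem_extensionClosure_of_distTriang Tr hTr (ih₁ fun X hX hX' u => ?_) h₃
    obtain ⟨w, rfl⟩ := Triangle.yoneda_exact₂ _ (inv_rot_of_distTriang _ hTr) u
      ((forall_hom_shift_eq_zero_iff (-1) 1 rfl).2
        (hom_eq_zero_of_mem_extensionClosure_left (hone X hX hX') h₃) _)
    rw [hom X hX hX' w]
    exact comp_zero

end ExtensionClosure

namespace BridgelandStabilityCondition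

variable {Λ : Type} [AddCommGroup Λ] {cls : C → Λ} {nrm : Λ → ℝ}
  (σ : BridgelandStabilityCondition C cls nrm)

theorem shift_one_mem_P {X : C} {φ : ℝ} (hX : X ∈ σ.P φ) : X⟦(1 : ℤ)⟧ ∈ σ.P (φ + 1) :=
  (σ.shiftMem φ _).2 ⟨X, hX, ⟨Iso.refl _⟩⟩

theorem shift_neg_one_mem_P {X : C} {φ : ℝ} (hX : X ∈ σ.P φ) : X⟦(-1 : ℤ)⟧ ∈ σ.P (φ - 1) := by
  obtain ⟨Y, hY, ⟨e⟩⟩ := (σ.shiftMem (φ - 1) X).1 (by rwa [sub_add_cancel])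
  exact σ.isoClosed _ _ _
    ((shiftFunctor C (-1 : ℤ)).mapIso e ≪≫ (shiftFunctorCompIsoId C 1 (-1) rfl).app Y).symm hY

theorem shift_mem_P {X : C} {φ : ℝ} (hX : X ∈ σ.P φ) (n : ℤ) : X⟦n⟧ ∈ σ.P (φ + n) := by
  induction n using Int.induction_on with
  | zero => simpa using σ.isoClosed _ _ _ ((shiftFunctorZero C ℤ).app X).symm hX
  | succ k ih =>
    have := σ.isoClosed _ _ _ ((shiftFunctorAdd' C (k : ℤ) 1 (k + 1) rfl).app X).symm
      (σ.shift_one_mem_P ih)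
    rwa [Int.cast_add, Int.cast_one, ← add_assoc]
  | pred k ih =>
    have := σ.isoClosed _ _ _ ((shiftFunctorAdd' C (-(k : ℤ)) (-1) (-k - 1) rfl).app X).symm
      (σ.shift_neg_one_mem_P ih)
    rwa [Int.cast_sub, Int.cast_one, ← add_sub_assoc]

theorem exists_shift_mem_P_Ioc {X : C} {φ : ℝ} (hX : X ∈ σ.P φ) :
    ∃ n : ℤ, φ - n ∈ Set.Ioc (0 : ℝ) 1 ∧ X⟦-n⟧ ∈ σ.P (φ - n) := by
  refine ⟨⌈φ⌉ - 1, ?_, by simpa [sub_eq_add_neg] using σ.shift_mem_P hX (-(⌈φ⌉ - 1))⟩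
  constructor <;> push_cast <;> linarith [Int.ceil_lt_add_one φ, Int.le_ceil φ]

/-- The data provided by the axiom `HN`; as there, some of the factors `A j` may be zero. -/
structure HNFiltration (E : C) where
  n : ℕ
  G : Fin (n + 1) → C
  A : Fin n → C
  χ : Fin n → ℝ
  f : ∀ j : Fin n, G j.castSucc ⟶ G j.succ
  g : ∀ j : Fin n, G j.succ ⟶ A j
  h : ∀ j : Fin n, A j ⟶ (G j.castSucc)⟦(1 : ℤ)⟧
  distinguished : ∀ j : Fin n, Triangle.mk (f j) (g j) (h j) ∈ distTriang C
  mem_P : ∀ j : Fin n, A j ∈ σ.P (χ j)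
  strictAnti : StrictAnti χ
  isZero_G_zero : IsZero (G 0)
  isoTop : G (Fin.last n) ≅ E

theorem nonempty_hnFiltration {E : C} (hE : ¬IsZero E) : Nonempty (σ.HNFiltration E) := by
  obtain ⟨n, G, χ, hχ, hG, ⟨e⟩, hcones⟩ := σ.HN E hE
  choose A hA f g h hdist using hcones
  exact ⟨⟨n, G, A, χ, f, g, h, hdist, hA, hχ, hG, e⟩⟩

namespace HNFiltration

variable {σ} {E : C} (H : σ.HNFiltration E)

theorem isZero_G {p : Fin (H.n + 1)} (hp : ∀ k : Fin H.n, k.castSucc < p → IsZero (H.A k)) :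
    IsZero (H.G p) := by
  induction p using Fin.induction with
  | zero => exact H.isZero_G_zero
  | succ i ih =>
    exact Triangle.isZero₂_of_isZero₁₃ _ (H.distinguished i)
      (ih fun k hk => hp k (hk.trans Fin.castSucc_lt_succ)) (hp i Fin.castSucc_lt_succ)

theorem G_mem_extensionClosure (p : Fin (H.n + 1)) :
    H.G p ∈ extensionClosure C (H.A '' {k | k.castSucc < p}) := by
  induction p using Fin.induction with
  | zero => exact mem_extensionClosure_of_isZero H.isZero_G_zero
  | succ i ih =>
    refine mem_extensionClosure_of_distTriang _ (H.distinguished i)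
      (extensionClosure_mono ?_ ih) (subset_extensionClosure ⟨i, Fin.castSucc_lt_succ, rfl⟩)
    exact Set.image_mono fun k hk => lt_trans hk Fin.castSucc_lt_succ

theorem comp_f_ne_zero {i j : Fin H.n} (hji : j < i) {u : H.A j ⟶ H.G i.castSucc} (hu : u ≠ 0) :
    u ≫ H.f i ≠ 0 := by
  intro h0
  obtain ⟨w, rfl⟩ :=
    Triangle.coyoneda_exact₂ _ (inv_rot_of_distTriang _ (H.distinguished i)) u h0
  refine hu ?_
  rw [σ.homZero _ _ ?_ _ (H.mem_P j) _ (σ.shift_neg_one_mem_P (H.mem_P i)) w]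
  · exact zero_comp
  · linarith [H.strictAnti hji]

theorem g_ne_zero {i : Fin H.n} (hi : ¬IsZero (H.A i)) : H.g i ≠ 0 := by
  intro h0
  obtain ⟨w, hw⟩ := Triangle.yoneda_exact₂ _ (rot_of_distTriang _ (H.distinguished i))
    (𝟙 (H.A i)) (by
      change H.g i ≫ _ = 0
      rw [h0]
      exact zero_comp)
  have hw0 : w = 0 := by
    refine (forall_hom_shift_eq_zero_iff 1 (-1) rfl).2
      (hom_eq_zero_of_mem_extensionClosure_left ?_ (H.G_mem_extensionClosure i.castSucc)) w
    rintro _ ⟨k, hk, rfl⟩ f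
    refine σ.homZero _ _ ?_ _ (H.mem_P k) _ (σ.shift_neg_one_mem_P (H.mem_P i)) f
    linarith [H.strictAnti (Fin.castSucc_lt_castSucc_iff.1 hk)]
  rw [hw0, comp_zero] at hw
  exact hi ((IsZero.iff_id_eq_zero _).2 hw)

theorem forall_isZero_A_or_exists_maxPhase_hom (p : Fin (H.n + 1)) :
    (∀ k : Fin H.n, k.castSucc < p → IsZero (H.A k)) ∨
      ∃ j : Fin H.n, j.castSucc < p ∧ (∀ k, k.castSucc < p → ¬IsZero (H.A k) → H.χ k ≤ H.χ j) ∧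
        ∃ u : H.A j ⟶ H.G p, u ≠ 0 := by
  induction p using Fin.induction with
  | zero => exact Or.inl fun k hk => absurd hk (Fin.not_lt_zero _)
  | succ i ih =>
    simp only [Fin.castSucc_lt_castSucc_iff] at ih
    simp only [Fin.castSucc_lt_succ_iff]
    rcases ih with hzero | ⟨j, hj, hmax, u, hu⟩
    · by_cases hAi : IsZero (H.A i)
      · refine Or.inl fun k hk => ?_
        rcases hk.lt_or_eq with hk | rfl
        exacts [hzero k hk, hAi]
      · have : IsIso (H.g i) := (Triangle.isZero₁_iff_isIso₂ _ (H.distinguished i)).1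
          (H.isZero_G fun k hk => hzero k (Fin.castSucc_lt_castSucc_iff.1 hk))
        refine Or.inr ⟨i, le_rfl, fun k hk hAk => ?_, inv (H.g i), fun h0 => hAi ?_⟩
        · rcases hk.lt_or_eq with hk | rfl
          exacts [absurd (hzero k hk) hAk, le_rfl]
        · rw [IsZero.iff_id_eq_zero, ← IsIso.inv_hom_id (H.g i), h0, zero_comp]
    · refine Or.inr ⟨j, hj.le, fun k hk hAk => ?_, u ≫ H.f i, H.comp_f_ne_zero hj hu⟩
      rcases hk.lt_or_eq with hk | rfl
      exacts [hmax k hk hAk, (H.strictAnti hj).le]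

theorem forall_isZero_A_or_exists_minPhase_hom (p : Fin (H.n + 1)) :
    (∀ k : Fin H.n, k.castSucc < p → IsZero (H.A k)) ∨
      ∃ j : Fin H.n, j.castSucc < p ∧ (∀ k, k.castSucc < p → ¬IsZero (H.A k) → H.χ j ≤ H.χ k) ∧
        ∃ u : H.G p ⟶ H.A j, u ≠ 0 := by
  induction p using Fin.induction with
  | zero => exact Or.inl fun k hk => absurd hk (Fin.not_lt_zero _)
  | succ i ih =>
    simp only [Fin.castSucc_lt_castSucc_iff] at ih
    simp only [Fin.castSucc_lt_succ_iff]
    by_cases hAi : IsZero (H.A i)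
    · have : IsIso (H.f i) := (Triangle.isZero₃_iff_isIso₁ _ (H.distinguished i)).1 hAi
      have hlt : ∀ k ≤ i, ¬IsZero (H.A k) → k < i := fun k hk hAk =>
        hk.lt_of_ne (by rintro rfl; exact hAk hAi)
      rcases ih with hzero | ⟨j, hj, hmin, u, hu⟩
      · exact Or.inl fun k hk => by_contra fun hAk => hAk (hzero k (hlt k hk hAk))
      · refine Or.inr ⟨j, hj.le, fun k hk hAk => hmin k (hlt k hk hAk) hAk, inv (H.f i) ≫ u,
          fun h0 => hu ?_⟩
        simpa using congrArg (H.f i ≫ ·) h0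
    · exact Or.inr ⟨i, le_rfl, fun k hk _ => H.strictAnti.antitone hk, H.g i, H.g_ne_zero hAi⟩

theorem phase_le_of_forall_hom_eq_zero {φ : ℝ}
    (hE : ∀ θ, φ < θ → ∀ W ∈ σ.P θ, ∀ u : W ⟶ E, u = 0) {k : Fin H.n} (hk : ¬IsZero (H.A k)) :
    H.χ k ≤ φ := by
  rcases H.forall_isZero_A_or_exists_maxPhase_hom (Fin.last _) with hzero | ⟨j, -, hmax, u, hu⟩
  · exact absurd (hzero k (Fin.castSucc_lt_last k)) hk
  refine (hmax k (Fin.castSucc_lt_last k) hk).trans (not_lt.1 fun hj => hu ?_)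
  simpa using congrArg (· ≫ H.isoTop.inv) (hE _ hj _ (H.mem_P j) (u ≫ H.isoTop.hom))

theorem le_phase_of_forall_hom_eq_zero {φ : ℝ}
    (hE : ∀ θ, θ < φ → ∀ W ∈ σ.P θ, ∀ u : E ⟶ W, u = 0) {k : Fin H.n} (hk : ¬IsZero (H.A k)) :
    φ ≤ H.χ k := by
  rcases H.forall_isZero_A_or_exists_minPhase_hom (Fin.last _) with hzero | ⟨j, -, hmin, u, hu⟩
  · exact absurd (hzero k (Fin.castSucc_lt_last k)) hk
  refine (not_lt.1 fun hj => hu ?_).trans (hmin k (Fin.castSucc_lt_last k) hk)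
  simpa using congrArg (H.isoTop.hom ≫ ·) (hE _ hj _ (H.mem_P j) (H.isoTop.inv ≫ u))

theorem mem_P_of_phase_eq {φ : ℝ} (hφ : ∀ k, ¬IsZero (H.A k) → H.χ k = φ) : E ∈ σ.P φ := by
  suffices ∀ p, H.G p ∈ σ.P φ from σ.isoClosed _ _ _ H.isoTop (this _)
  intro p
  induction p using Fin.induction with
  | zero => exact σ.zeroMem _ _ H.isZero_G_zero
  | succ i ih =>
    by_cases hAi : IsZero (H.A i)
    · have : IsIso (H.f i) := (Triangle.isZero₃_iff_isIso₁ _ (H.distinguished i)).1 hAi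
      exact σ.isoClosed _ _ _ (asIso (H.f i)) ih
    · have hzero : ∀ k, k.castSucc < i.castSucc → IsZero (H.A k) := fun k hk => by
        by_contra hAk
        exact (H.strictAnti (Fin.castSucc_lt_castSucc_iff.1 hk)).ne
          ((hφ i hAi).trans (hφ k hAk).symm)
      have : IsIso (H.g i) :=
        (Triangle.isZero₁_iff_isIso₂ _ (H.distinguished i)).1 (H.isZero_G hzero)
      exact σ.isoClosed _ _ _ (asIso (H.g i)).symm (hφ i hAi ▸ H.mem_P i)

end HNFiltration

theorem mem_P_of_forall_hom_eq_zero {E : C} {φ : ℝ}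
    (h_above : ∀ θ, φ < θ → ∀ W ∈ σ.P θ, ∀ u : W ⟶ E, u = 0)
    (h_below : ∀ θ, θ < φ → ∀ W ∈ σ.P θ, ∀ u : E ⟶ W, u = 0) : E ∈ σ.P φ := by
  by_cases hE : IsZero E
  · exact σ.zeroMem φ E hE
  obtain ⟨H⟩ := σ.nonempty_hnFiltration hE
  exact H.mem_P_of_phase_eq fun k hk =>
    le_antisymm (H.phase_le_of_forall_hom_eq_zero h_above hk)
      (H.le_phase_of_forall_hom_eq_zero h_below hk)

theorem mem_P_of_distTriang {φ : ℝ} (T : Triangle C) (hT : T ∈ distTriang C)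
    (h₁ : T.obj₁ ∈ σ.P φ) (h₃ : T.obj₃ ∈ σ.P φ) : T.obj₂ ∈ σ.P φ := by
  refine σ.mem_P_of_forall_hom_eq_zero (fun θ hθ W hW u => ?_) (fun θ hθ W hW u => ?_)
  · obtain ⟨w, rfl⟩ := Triangle.coyoneda_exact₂ T hT u (σ.homZero θ φ hθ W hW _ h₃ _)
    rw [σ.homZero θ φ hθ W hW _ h₁ w, zero_comp]
  · obtain ⟨w, rfl⟩ := Triangle.yoneda_exact₂ T hT u (σ.homZero φ θ hθ _ h₁ W hW _)
    rw [σ.homZero φ θ hθ _ h₃ W hW w, comp_zero]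

theorem extensionClosure_subset_P {S : Set C} {φ : ℝ} (hS : S ⊆ σ.P φ) :
    extensionClosure C S ⊆ σ.P φ :=
  extensionClosure_subset hS (σ.isoClosed φ) (σ.zeroMem φ) σ.mem_P_of_distTriang

theorem mem_extensionClosure_image_phase_eq {m : ℕ} {F : Fin m → C} {ψ : Fin m → ℝ}
    (hF : ∀ i, F i ∈ σ.P (ψ i)) (hneg : ∀ i j, ∀ f : F i ⟶ (F j)⟦(-1 : ℤ)⟧, f = 0)
    (hone : ∀ i j, ψ i < ψ j → ∀ f : F j ⟶ (F i)⟦(1 : ℤ)⟧, f = 0) {Y : C} {φ : ℝ}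
    (hY : Y ∈ σ.P φ) (hYF : Y ∈ extensionClosure C (Set.range F)) :
    Y ∈ extensionClosure C (F '' {l | ψ l = φ}) := by
  have hle : Y ∈ extensionClosure C (F '' {l | ψ l ≤ φ}) := by
    refine mem_extensionClosure_of_forall_hom_from_eq_zero ?_ ?_ hYF ?_
    · rintro _ ⟨i, rfl⟩ - _ ⟨j, rfl⟩
      exact hneg i j
    · rintro _ ⟨j, rfl⟩ hj _ ⟨i, hi, rfl⟩
      exact hone i j (hi.trans_lt (not_le.1 fun h => hj ⟨j, h, rfl⟩))
    · rintro _ ⟨i, rfl⟩ hi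
      exact σ.homZero _ _ (not_le.1 fun h => hi ⟨i, h, rfl⟩) _ (hF i) _ hY
  have hlt : ∀ j, ψ j ≤ φ → F j ∉ F '' {l | ψ l = φ} → ψ j < φ := fun j hj hj' =>
    hj.lt_of_ne fun h => hj' ⟨j, h, rfl⟩
  refine mem_extensionClosure_of_forall_hom_to_eq_zero ?_ ?_ hle ?_
  · rintro _ ⟨j, -, rfl⟩ - _ ⟨i, -, rfl⟩
    exact hneg i j
  · rintro _ ⟨j, hj, rfl⟩ hj' _ ⟨i, hi, rfl⟩
    exact hone j i ((hlt j hj hj').trans_eq hi.symm)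
  · rintro _ ⟨j, hj, rfl⟩ hj'
    exact σ.homZero _ _ (hlt j hj hj') _ hY _ (hF j)

variable {σ}

theorem IsStable.of_iso {φ : ℝ} {X Y : C} (e : X ≅ Y) (hX : σ.IsStable φ X) :
    σ.IsStable φ Y := by
  obtain ⟨⟨hP, hnz⟩, htri⟩ := hX
  refine ⟨⟨σ.isoClosed _ _ _ e hP, fun hz => hnz (hz.of_iso e)⟩,
    fun A B hA hnA hB hnB f g h hT => htri A B hA hnA hB hnB (f ≫ e.inv) (e.hom ≫ g) h ?_⟩
  exact isomorphic_distinguished _ hT _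
    (Triangle.isoMk _ _ (Iso.refl _) e (Iso.refl _) (by simp [Triangle.mk])
      (by simp [Triangle.mk]) (by simp [Triangle.mk]))

theorem IsStable.exists_iso_of_mem_extensionClosure {φ : ℝ} {S : Set C} (hS : S ⊆ σ.P φ)
    {X : C} (hX : σ.IsStable φ X) (hXS : X ∈ extensionClosure C S) :
    ∃ Z ∈ S, Nonempty (X ≅ Z) := by
  induction hXS using extensionClosure_induction with
  | mem X hX' => exact ⟨X, hX', ⟨Iso.refl _⟩⟩
  | zero X hz => exact absurd hz hX.1.2
  | iso X Y e _ ih =>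
    obtain ⟨Z, hZ, ⟨e'⟩⟩ := ih (hX.of_iso e.symm)
    exact ⟨Z, hZ, ⟨e.symm ≪≫ e'⟩⟩
  | ext T hT h₁ h₃ ih₁ ih₃ =>
    by_cases hz₁ : IsZero T.obj₁
    · have : IsIso T.mor₂ := (Triangle.isZero₁_iff_isIso₂ _ hT).1 hz₁
      obtain ⟨Z, hZ, ⟨e⟩⟩ := ih₃ (hX.of_iso (asIso T.mor₂))
      exact ⟨Z, hZ, ⟨asIso T.mor₂ ≪≫ e⟩⟩
    by_cases hz₃ : IsZero T.obj₃
    · have : IsIso T.mor₁ := (Triangle.isZero₃_iff_isIso₁ _ hT).1 hz₃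
      obtain ⟨Z, hZ, ⟨e⟩⟩ := ih₁ (hX.of_iso (asIso T.mor₁).symm)
      exact ⟨Z, hZ, ⟨(asIso T.mor₁).symm ≪≫ e⟩⟩
    exact absurd hT (hX.2 _ _ (σ.extensionClosure_subset_P hS h₁) hz₁
      (σ.extensionClosure_subset_P hS h₃) hz₃ T.mor₁ T.mor₂ T.mor₃)

end BridgelandStabilityCondition

/-- The classification of stable objects used in Propositions 3.2 and A.1 of the paper:
if the heart `P((0,1])` of a stability condition `σ` on a ℂ-linear triangulated category
with finite-dimensional Hom-spaces is the extension closure of a full Ext-exceptional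
collection `F_1, …, F_m` of `σ`-stable objects of phases in `(0,1]`, and
`Hom(F_j, F_i[1]) = 0` whenever `φ_σ(F_i) < φ_σ(F_j)`, then every `σ`-stable object is
isomorphic to some shift `F_i[k]`. -/
theorem stmt_4 {C : Type u} [Category.{v} C] [Preadditive C] [CategoryTheory.Linear ℂ C]
    [HasZeroObject C] [HasShift C ℤ] [∀ k : ℤ, (shiftFunctor C k).Additive]
    [Pretriangulated C] [∀ X Y : C, FiniteDimensional ℂ (X ⟶ Y)]
    {Λ : Type} [AddCommGroup Λ] (cls : C → Λ) (nrm : Λ → ℝ)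
    (σ : BridgelandStabilityCondition C cls nrm)
    (m : ℕ) (F : Fin m → C) (ψ : Fin m → ℝ)
    -- the `F_i` are `σ`-stable with phases in `(0, 1]`:
    (hψ : ∀ i, ψ i ∈ Set.Ioc (0 : ℝ) 1)
    (hstable : ∀ i, σ.IsStable (ψ i) (F i))
    -- `{F_1, …, F_m}` is an Ext-exceptional collection:
    (hendo : ∀ i, Module.finrank ℂ (F i ⟶ F i) = 1)
    (hexc : ∀ i, ∀ k : ℤ, k ≠ 0 → ∀ f : F i ⟶ (F i)⟦k⟧, f = 0)
    (hext : ∀ i j : Fin m, i ≠ j → ∀ k : ℤ, k ≤ 0 → ∀ f : F i ⟶ (F j)⟦k⟧, f = 0)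
    -- the collection is full:
    (hfull : TriangulatedGenerates C (Set.range F))
    -- the heart of `σ` is the extension closure of the collection:
    (hheart : σ.heart = extensionClosure C (Set.range F))
    -- `Ext¹` vanishes from higher to lower phase:
    (hext1 : ∀ i j : Fin m, ψ i < ψ j → ∀ f : F j ⟶ (F i)⟦(1 : ℤ)⟧, f = 0) :
    ∀ (X : C) (φ' : ℝ), σ.IsStable φ' X →
      ∃ (i : Fin m) (k : ℤ), Nonempty (X ≅ (F i)⟦k⟧) := by
  intro X φ' hX
  have hF : ∀ i, F i ∈ σ.P (ψ i) := fun i => (hstable i).1.1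
  have hneg : ∀ i j, ∀ f : F i ⟶ (F j)⟦(-1 : ℤ)⟧, f = 0 := fun i j => by
    by_cases hij : i = j
    · exact hij ▸ hexc i (-1) (by norm_num)
    · exact hext i j hij (-1) (by norm_num)
  obtain ⟨n, hφ, hY⟩ := σ.exists_shift_mem_P_Ioc hX.1.1
  have hYF : X⟦-n⟧ ∈ extensionClosure C (Set.range F) :=
    hheart ▸ subset_extensionClosure (Set.mem_biUnion hφ hY)
  have hXS : X ∈ extensionClosure C ((shiftFunctor C n).obj '' (F '' {l | ψ l = φ' - n})) :=
    mem_extensionClosure_of_iso ((shiftFunctorCompIsoId C (-n) n (by omega)).app X)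
      (shift_mem_extensionClosure
        (σ.mem_extensionClosure_image_phase_eq hF hneg hext1 hY hYF) n)
  have hS : (shiftFunctor C n).obj '' (F '' {l | ψ l = φ' - n}) ⊆ σ.P φ' := by
    rintro _ ⟨_, ⟨i, hi, rfl⟩, rfl⟩
    have := σ.shift_mem_P (hF i) n
    rwa [hi, sub_add_cancel] at this
  obtain ⟨_, ⟨_, ⟨i, -, rfl⟩, rfl⟩, e⟩ := hX.exists_iso_of_mem_extensionClosure hS hXS
  exact ⟨i, n, e⟩
end
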